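/- arXiv:1510.08341 — 3 statements merged into one kernel-verified Lean document; each statement's English description precedes it below -/
import Mathlib

section
/- The function A(θ) = 4 θ^{-2} (Γ(1/θ))^3 / Γ(3/θ) · e^{2/θ} is strictly increasing on (0,2] and strictly decreasing on [2,∞). -/
/-- `A(θ) = 4 θ⁻² Γ(1/θ)³ / Γ(3/θ) · e^{2/θ}`. -/
noncomputable def A (θ : ℝ) : ℝ :=
  4 / θ ^ 2 * (Real.Gamma (1 / θ)) ^ 3 / Real.Gamma (3 / θ) * Real.exp (2 / θ)

/-!
With `x = 1/θ` one has `A θ = 4 exp (g x)` where `g x = 2x + 2 log x + 3 log Γ(x) - log Γ(3x)`.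
Grouping the factors of the Euler–Gauss product for `Γ(3x)` three at a time, `g` is the limit of
a linear function plus sums of the strictly concave blocks `log (3t-2) + log (3t-1) - 2 log t` at
`t = x + m + 1`, so `g` is strictly concave on `(0, ∞)`. Its derivative vanishes at `1/2`, because
`(log Γ)'(3/2) = (log Γ)'(1/2) + 2`; hence `g` increases on `(0, 1/2]` and decreases on
`[1/2, ∞)`, and `θ ↦ 1/θ` reverses the order.
-/

open Real Set Filter Topology
open scoped Nat

theorem ConcaveOn.sum {𝕜 E β ι : Type*} [Semiring 𝕜] [PartialOrder 𝕜] [AddCommMonoid E]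
    [AddCommMonoid β] [PartialOrder β] [IsOrderedAddMonoid β] [SMul 𝕜 E] [Module 𝕜 β]
    {s : Set E} {t : Finset ι} {f : ι → E → β} (hs : Convex 𝕜 s)
    (hf : ∀ i ∈ t, ConcaveOn 𝕜 s (f i)) : ConcaveOn 𝕜 s fun x ↦ ∑ i ∈ t, f i x := by
  classical
  induction t using Finset.induction_on with
  | empty => simpa using concaveOn_const 0 hs
  | insert i t hi ih =>
    simp_rw [Finset.sum_insert hi]
    exact (hf i (t.mem_insert_self i)).add (ih fun j hj ↦ hf j (Finset.mem_insert_of_mem hj))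

theorem ConcaveOn.of_tendsto {E ι : Type*} [AddCommMonoid E] [Module ℝ E] {s : Set E}
    {l : Filter ι} [l.NeBot] {F : ι → E → ℝ} {f : E → ℝ} (hF : ∀ᶠ i in l, ConcaveOn ℝ s (F i))
    (hf : ∀ x ∈ s, Tendsto (fun i ↦ F i x) l (𝓝 (f x))) : ConcaveOn ℝ s f := by
  obtain ⟨i, hi⟩ := hF.exists
  refine ⟨hi.1, fun x hx y hy a b ha hb hab ↦ ?_⟩
  exact le_of_tendsto_of_tendsto (((hf x hx).const_smul a).add ((hf y hy).const_smul b))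
    (hf _ (hi.1 hx hy ha hb hab)) (hF.mono fun i hi ↦ hi.2 hx hy ha hb hab)

theorem StrictConcaveOn.strictMonoOn_strictAntiOn_of_deriv_eq_zero {f : ℝ → ℝ} {a c : ℝ}
    (hf : StrictConcaveOn ℝ (Ioi a) f) (hd : ∀ x ∈ Ioi a, DifferentiableAt ℝ f x) (hac : a < c)
    (hc : deriv f c = 0) : StrictMonoOn f (Ioc a c) ∧ StrictAntiOn f (Ici c) := by
  have hcont : ContinuousOn f (Ioi a) := fun x hx ↦ (hd x hx).continuousAt.continuousWithinAt
  have hanti := hf.strictAntiOn_deriv hd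
  constructor
  · refine strictMonoOn_of_deriv_pos (convex_Ioc a c) (hcont.mono Ioc_subset_Ioi_self) ?_
    rw [interior_Ioc]
    exact fun x hx ↦ hc ▸ hanti hx.1 hac hx.2
  · refine strictAntiOn_of_deriv_neg (convex_Ici c)
      (hcont.mono fun x hx ↦ hac.trans_le hx) ?_
    rw [interior_Ici]
    exact fun x hx ↦ hc ▸ hanti hac (hac.trans hx) hx

noncomputable def logBlock (t : ℝ) : ℝ := log (3 * t - 2) + log (3 * t - 1) - 2 * log t

theorem hasDerivAt_logBlock {t : ℝ} (ht : 2 / 3 < t) :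
    HasDerivAt logBlock (2 / (t * (3 * t - 2)) + 1 / (t * (3 * t - 1))) t := by
  have h₂ : HasDerivAt (fun t ↦ 3 * t - 2) 3 t := by
    simpa using ((hasDerivAt_id t).const_mul 3).sub_const 2
  have h₁ : HasDerivAt (fun t ↦ 3 * t - 1) 3 t := by
    simpa using ((hasDerivAt_id t).const_mul 3).sub_const 1
  have h₂' : 0 < 3 * t - 2 := by linarith
  have h₁' : 0 < 3 * t - 1 := by linarith
  refine (((h₂.log h₂'.ne').add (h₁.log h₁'.ne')).sub
    ((hasDerivAt_log (by linarith : t ≠ 0)).const_mul 2)).congr_deriv ?_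
  field_simp
  ring

theorem strictConcaveOn_logBlock : StrictConcaveOn ℝ (Ioi (2 / 3)) logBlock := by
  refine StrictAntiOn.strictConcaveOn_of_deriv (convex_Ioi _)
    (fun t ht ↦ (hasDerivAt_logBlock ht).continuousAt.continuousWithinAt) ?_
  rw [interior_Ioi]
  intro s (hs : 2 / 3 < s) t (ht : 2 / 3 < t) hst
  rw [(hasDerivAt_logBlock hs).deriv, (hasDerivAt_logBlock ht).deriv]
  gcongr ?_ + ?_
  · exact div_lt_div_of_pos_left two_pos (by nlinarith) (by nlinarith)
  · exact div_lt_div_of_pos_left one_pos (by nlinarith) (by nlinarith)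

theorem strictConcaveOn_logBlock_add {c : ℝ} (hc : 2 / 3 ≤ c) :
    StrictConcaveOn ℝ (Ioi 0) fun x ↦ logBlock (x + c) :=
  (strictConcaveOn_logBlock.translate_left c).subset
    (fun x (hx : 0 < x) ↦ show 2 / 3 < c + x by linarith) (convex_Ioi 0)

noncomputable def logAInv (x : ℝ) : ℝ :=
  2 * x + 2 * log x + 3 * log (Gamma x) - log (Gamma (3 * x))

theorem A_eq_four_mul_exp_logAInv {θ : ℝ} (hθ : 0 < θ) : A θ = 4 * exp (logAInv (1 / θ)) := by
  have hx : 0 < 1 / θ := by positivity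
  have hΓ₁ := Gamma_pos_of_pos hx
  have hΓ₃ := Gamma_pos_of_pos (by positivity : 0 < 3 * (1 / θ))
  rw [logAInv, exp_sub, exp_add, exp_add, ← log_rpow hx, ← log_rpow hΓ₁, exp_log (by positivity),
    exp_log (by positivity), exp_log hΓ₃, A, mul_one_div, mul_one_div]
  norm_cast
  field_simp

noncomputable def logAInvSeq (n : ℕ) (x : ℝ) : ℝ :=
  2 * x + 2 * log x + 3 * BohrMollerup.logGammaSeq x n - BohrMollerup.logGammaSeq (3 * x) (3 * n)

theorem tendsto_logAInvSeq {x : ℝ} (hx : 0 < x) :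
    Tendsto (fun n ↦ logAInvSeq n x) atTop (𝓝 (logAInv x)) := by
  have h₃ := (BohrMollerup.tendsto_log_gamma (by positivity : 0 < 3 * x)).comp
    (tendsto_id.const_mul_atTop' (by norm_num : 0 < 3))
  exact (tendsto_const_nhds.add ((BohrMollerup.tendsto_log_gamma hx).const_mul 3)).sub h₃

theorem Finset.sum_range_three_mul_add_one {M : Type*} [AddCommMonoid M] (f : ℕ → M) (n : ℕ) :
    ∑ k ∈ range (3 * n + 1), f k
      = f 0 + ∑ m ∈ range n, (f (3 * m + 1) + f (3 * m + 2) + f (3 * m + 3)) := by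
  induction n with
  | zero => simp
  | succ n ih =>
    rw [show 3 * (n + 1) + 1 = 3 * n + 1 + 1 + 1 + 1 by ring, sum_range_succ, sum_range_succ,
      sum_range_succ, ih, sum_range_succ]
    simp only [add_assoc]

theorem logAInvSeq_eq {x : ℝ} (hx : 0 < x) {n : ℕ} (hn : n ≠ 0) :
    logAInvSeq n x = (2 - 3 * log 3) * x + ((n + 1) * log 3 + 3 * log n ! - log (3 * n)!)
      + ∑ m ∈ Finset.range n, logBlock (x + m + 1) := by
  have hblock : ∀ m : ℕ, log (3 * x + ↑(3 * m + 1)) + log (3 * x + ↑(3 * m + 2))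
      + log (3 * x + ↑(3 * m + 3)) - 3 * log (x + ↑(m + 1)) = log 3 + logBlock (x + m + 1) := by
    intro m
    rw [logBlock, show 3 * x + ↑(3 * m + 3) = 3 * (x + m + 1) by push_cast; ring,
      log_mul three_ne_zero (by positivity)]
    push_cast
    ring_nf
  rw [logAInvSeq, BohrMollerup.logGammaSeq, BohrMollerup.logGammaSeq,
    Finset.sum_range_three_mul_add_one (fun k ↦ log (3 * x + k)), Finset.sum_range_succ',
    ← sub_eq_zero]
  simp only [Nat.cast_mul, Nat.cast_ofNat, CharP.cast_eq_zero, add_zero]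
  rw [Finset.sum_congr rfl fun m _ ↦ eq_sub_of_add_eq' (hblock m).symm,
    log_mul three_ne_zero hx.ne', log_mul three_ne_zero (by exact_mod_cast hn)]
  simp only [Finset.sum_sub_distrib, Finset.sum_const, Finset.card_range, nsmul_eq_mul,
    ← Finset.mul_sum]
  ring

theorem strictConcaveOn_logAInv : StrictConcaveOn ℝ (Ioi 0) logAInv := by
  -- The block `m = 0` carries the strictness; the rest is only a limit of concave functions.
  have hrest : ConcaveOn ℝ (Ioi 0) fun x ↦ logAInv x - logBlock (x + 1) := by
    refine ConcaveOn.of_tendsto (l := atTop) (F := fun (n : ℕ) x ↦ (2 - 3 * log 3) * x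
        + ((n + 2) * log 3 + 3 * log (n + 1)! - log (3 * (n + 1))!)
        + ∑ m ∈ Finset.range n, logBlock (x + (m + 2)))
      (Eventually.of_forall fun n ↦ ?_) fun x hx ↦ ?_
    · refine (((LinearMap.mulLeft ℝ (2 - 3 * log 3)).concaveOn (convex_Ioi 0)).add_const _).add
        (ConcaveOn.sum (convex_Ioi 0) fun m _ ↦ (strictConcaveOn_logBlock_add ?_).concaveOn)
      linarith [m.cast_nonneg (α := ℝ)]
    · refine (((tendsto_add_atTop_iff_nat 1).2 (tendsto_logAInvSeq hx)).sub_const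
        (logBlock (x + 1))).congr fun n ↦ ?_
      rw [logAInvSeq_eq hx n.add_one_ne_zero, Finset.sum_range_succ']
      push_cast
      ring_nf
  exact ((strictConcaveOn_logBlock_add (c := 1) (by norm_num)).add_concaveOn hrest).congr
    fun x _ ↦ by simp

theorem differentiableAt_log_Gamma {x : ℝ} (hx : 0 < x) : DifferentiableAt ℝ (log ∘ Gamma) x :=
  (differentiableAt_Gamma fun m ↦ by linarith [m.cast_nonneg (α := ℝ)]).log
    (Gamma_pos_of_pos hx).ne'

theorem hasDerivAt_log_Gamma_add_one {x d : ℝ} (hx : 0 < x) (h : HasDerivAt (log ∘ Gamma) d x) :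
    HasDerivAt (log ∘ Gamma) (d + x⁻¹) (x + 1) := by
  have hshift : (fun y ↦ (log ∘ Gamma) (y - 1) + log (y - 1)) =ᶠ[𝓝 (x + 1)] log ∘ Gamma := by
    filter_upwards [Ioi_mem_nhds (by linarith : 1 < x + 1)] with y (hy : 1 < y)
    have hy₀ : 0 < y - 1 := by linarith
    rw [Function.comp_apply, Function.comp_apply, ← log_mul (Gamma_pos_of_pos hy₀).ne' hy₀.ne',
      mul_comm, ← Gamma_add_one hy₀.ne', sub_add_cancel]
  refine HasDerivAt.congr_of_eventuallyEq ?_ hshift.symm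
  exact (HasDerivAt.comp_sub_const (x + 1) 1 (by simpa using h)).add
    (HasDerivAt.comp_sub_const (x + 1) 1 (by simpa using hasDerivAt_log hx.ne'))

theorem differentiableAt_logAInv {x : ℝ} (hx : 0 < x) : DifferentiableAt ℝ logAInv x :=
  (((differentiableAt_id.const_mul 2).add ((differentiableAt_log hx.ne').const_mul 2)).add
    ((differentiableAt_log_Gamma hx).const_mul 3)).sub
    ((differentiableAt_log_Gamma (by positivity : 0 < 3 * x)).comp x
      (differentiableAt_id.const_mul 3))

theorem hasDerivAt_logAInv_one_half : HasDerivAt logAInv 0 (1 / 2) := by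
  have hd := (differentiableAt_log_Gamma one_half_pos).hasDerivAt
  have hd₃ := hasDerivAt_log_Gamma_add_one one_half_pos hd
  rw [show (1 / 2 : ℝ) + 1 = 3 * (1 / 2) by norm_num] at hd₃
  have h := (((hasDerivAt_id (1 / 2 : ℝ)).const_mul 2).add
    ((hasDerivAt_log (by norm_num : (1 / 2 : ℝ) ≠ 0)).const_mul 2)).add (hd.const_mul 3) |>.sub
    (hd₃.comp (1 / 2) ((hasDerivAt_id (1 / 2 : ℝ)).const_mul 3))
  refine h.congr_deriv ?_
  norm_num
  ring

/-- `A` is strictly increasing on `(0,2]` and strictly decreasing on `[2,∞)`. -/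
theorem A_strictMono_strictAnti :
    StrictMonoOn A (Set.Ioc 0 2) ∧ StrictAntiOn A (Set.Ici 2) := by
  obtain ⟨hmono, hanti⟩ := strictConcaveOn_logAInv.strictMonoOn_strictAntiOn_of_deriv_eq_zero
    (fun _ hx ↦ differentiableAt_logAInv hx) one_half_pos hasDerivAt_logAInv_one_half.deriv
  refine ⟨fun s ⟨hs, hs₂⟩ t ⟨ht, ht₂⟩ hst ↦ ?_, fun s (hs : 2 ≤ s) t (ht : 2 ≤ t) hst ↦ ?_⟩
  · rw [A_eq_four_mul_exp_logAInv hs, A_eq_four_mul_exp_logAInv ht]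
    gcongr
    exact hanti (one_div_le_one_div_of_le ht ht₂) (one_div_le_one_div_of_le hs hs₂)
      (one_div_lt_one_div_of_lt hs hst)
  · have hs₀ : 0 < s := by linarith
    rw [A_eq_four_mul_exp_logAInv hs₀, A_eq_four_mul_exp_logAInv (hs₀.trans hst)]
    gcongr
    exact hmono ⟨by positivity, one_div_le_one_div_of_le two_pos ht⟩
      ⟨by positivity, one_div_le_one_div_of_le two_pos hs⟩ (one_div_lt_one_div_of_lt hs₀ hst)
end

section
/- The map r ↦ φ(3/r) - φ(1/r) is strictly decreasing on (0,∞), where φ(x) = Σ_{n=1}^∞ (1/n - 1/(n+x)); in particular it equals 2/3 at r = 2, is greater than 2/3 for r < 2, and less than 2/3 for r > 2. -/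
/-!
Write `φ(y) - φ(x) = Σ_{n≥1} (1/(n+x) - 1/(n+y))`. For `0 ≤ a < b` the function
`h t = 1/(t+ka) - 1/(t+kb)` is decreasing, the series of `φ(kb) - φ(ka)` is `Σ_{n≥1} h n`, and
that of `φ(b) - φ(a)` is `Σ_{m≥0} k h(k(m+1))`. Grouping the first series into blocks
`h(km+1) + ⋯ + h(km+k)`, each block is at least `k h(km+k)`, strictly for `k ≥ 2`; so
`a ↦ φ(ka) - φ(a)` is strictly increasing. Take `k = 3` and `a = 1/r`. The value at `r = 2`
comes from the telescoping identity `φ(x+1) - φ(x) = 1/(x+1)`.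
-/

/-- `φ(x) = Σ_{n≥1} (1/n - 1/(n+x))`. -/
noncomputable def phi (x : ℝ) : ℝ :=
  ∑' n : ℕ, ((1 : ℝ) / (n + 1 : ℝ) - 1 / ((n + 1 : ℝ) + x))

open Filter Set Topology

theorem HasSum.sum_fin_mul_add {α : Type*} [AddCommMonoid α] [TopologicalSpace α]
    [ContinuousAdd α] [RegularSpace α] {f : ℕ → α} {a : α} (hf : HasSum f a)
    (k : ℕ) [NeZero k] : HasSum (fun m => ∑ j : Fin k, f (m * k + j)) a :=
  ((Nat.divModEquiv k).symm.hasSum_iff.mpr hf).prod_fiberwise fun _ => hasSum_fintype _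

theorem strictAntiOn_one_div_add_sub_one_div_add {p q : ℝ} (hpq : p < q) :
    StrictAntiOn (fun t => 1 / (t + p) - 1 / (t + q)) (Ioi (-p)) := by
  intro s hs t ht hst
  simp only [mem_Ioi] at hs ht
  have key (u : ℝ) (hu : -p < u) :
      1 / (u + p) - 1 / (u + q) = (q - p) / ((u + p) * (u + q)) := by
    rw [div_sub_div _ _ (by linarith) (by linarith)]
    ring
  simp only [key s hs, key t ht]
  exact div_lt_div_of_pos_left (by linarith) (by nlinarith) (by nlinarith)

theorem summable_phi_term {x : ℝ} (hx : 0 ≤ x) :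
    Summable fun n : ℕ => (1 : ℝ) / (n + 1 : ℝ) - 1 / ((n + 1 : ℝ) + x) := by
  have hsq : Summable fun n : ℕ => x * (1 / ((n : ℝ) + 1) ^ 2) :=
    ((summable_nat_add_iff 1).mpr (Real.summable_one_div_nat_pow.mpr one_lt_two)).mul_left x
      |>.congr fun n => by push_cast; rfl
  refine hsq.of_nonneg_of_le (fun n => ?_) (fun n => ?_)
  · exact sub_nonneg.mpr (one_div_le_one_div_of_le (by positivity) (by linarith))
  · have hn : (0 : ℝ) < n + 1 := by positivity
    rw [div_sub_div _ _ hn.ne' (by positivity), mul_one_div]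
    apply div_le_div₀ hx (by linarith) (by positivity)
    nlinarith

theorem hasSum_phi_sub_phi {x y : ℝ} (hx : 0 ≤ x) (hy : 0 ≤ y) :
    HasSum (fun n : ℕ => 1 / ((n + 1 : ℝ) + x) - 1 / ((n + 1 : ℝ) + y)) (phi y - phi x) := by
  simpa only [phi, sub_sub_sub_cancel_left] using
    (summable_phi_term hy).hasSum.sub (summable_phi_term hx).hasSum

theorem phi_mul_sub_phi_strictMonoOn {k : ℕ} (hk : 1 < k) :
    StrictMonoOn (fun a => phi (k * a) - phi a) (Ici 0) := by
  intro a ha b hb hab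
  simp only [mem_Ici] at ha hb
  have : NeZero k := ⟨by omega⟩
  have hk0 : (0 : ℝ) < k := by positivity
  set h : ℝ → ℝ := fun t => 1 / (t + k * a) - 1 / (t + k * b)
  have h_anti : StrictAntiOn h (Ioi (-(k * a))) :=
    strictAntiOn_one_div_add_sub_one_div_add (mul_lt_mul_of_pos_left hab hk0)
  have hmem (t : ℝ) (ht : 0 < t) : t ∈ Ioi (-(k * a)) := by
    simp only [mem_Ioi]
    nlinarith
  have hblocks : HasSum (fun m : ℕ => ∑ j : Fin k, h ((m * k + j : ℕ) + 1))
      (phi (k * b) - phi (k * a)) :=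
    (hasSum_phi_sub_phi (by positivity) (by positivity)).sum_fin_mul_add k
  have hscaled : HasSum (fun m : ℕ => ∑ _j : Fin k, h ((m * k + k : ℕ))) (phi b - phi a) := by
    convert hasSum_phi_sub_phi ha hb using 2 with m
    simp only [h, Finset.sum_const, Finset.card_univ, Fintype.card_fin, nsmul_eq_mul]
    push_cast
    field_simp
  have hterm (m : ℕ) (j : Fin k) : h ((m * k + k : ℕ)) ≤ h ((m * k + j : ℕ) + 1) :=
    h_anti.antitoneOn (hmem _ (by positivity)) (hmem _ (by positivity))
      (by exact_mod_cast (by omega : m * k + j + 1 ≤ m * k + k))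
  have hterm_lt (m : ℕ) (j : Fin k) (hj : (j : ℕ) + 1 < k) :
      h ((m * k + k : ℕ)) < h ((m * k + j : ℕ) + 1) :=
    h_anti (hmem _ (by positivity)) (hmem _ (by positivity))
      (by exact_mod_cast (by omega : m * k + j + 1 < m * k + k))
  have := hasSum_lt (fun m => Finset.sum_le_sum fun j _ => hterm m j)
    (Finset.sum_lt_sum (fun j _ => hterm 0 j)
      ⟨0, Finset.mem_univ _, hterm_lt 0 0 (by simpa using hk)⟩) hscaled hblocks
  linarith

theorem phi_add_one_sub_phi {x : ℝ} (hx : 0 ≤ x) : phi (x + 1) - phi x = 1 / (x + 1) := by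
  set c : ℕ → ℝ := fun n => 1 / ((n + 1 : ℝ) + x)
  have hterm : (fun n : ℕ => 1 / ((n + 1 : ℝ) + x) - 1 / ((n + 1 : ℝ) + (x + 1))) =
      fun n => c n - c (n + 1) := by
    ext n
    push_cast [c]
    ring_nf
  have hc : Tendsto c atTop (𝓝 0) :=
    tendsto_const_nhds.div_atTop <| tendsto_atTop_add_const_right _ _ <|
      tendsto_atTop_add_const_right _ _ tendsto_natCast_atTop_atTop
  have hsum := hasSum_phi_sub_phi hx (by linarith : 0 ≤ x + 1)
  rw [hterm] at hsum
  have hpartial :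
      Tendsto (fun N => ∑ n ∈ Finset.range N, (c n - c (n + 1))) atTop (𝓝 (c 0 - 0)) := by
    simpa only [Finset.sum_range_sub'] using hc.const_sub (c 0)
  rw [tendsto_nhds_unique hsum.tendsto_sum_nat hpartial]
  simp [c, add_comm]

/-- The map `r ↦ φ(3/r) - φ(1/r)` is strictly decreasing on `(0,∞)`, equals `2/3` at
`r = 2`, exceeds `2/3` for `r < 2`, and is less than `2/3` for `r > 2`. -/
theorem phi_diff_strictAnti :
    StrictAntiOn (fun r : ℝ => phi (3 / r) - phi (1 / r)) (Set.Ioi 0) ∧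
    phi (3 / 2) - phi (1 / 2) = 2 / 3 ∧
    (∀ r : ℝ, 0 < r → r < 2 → 2 / 3 < phi (3 / r) - phi (1 / r)) ∧
    (∀ r : ℝ, 2 < r → phi (3 / r) - phi (1 / r) < 2 / 3) := by
  have hmono : StrictMonoOn (fun a => phi (3 * a) - phi a) (Ici 0) := by
    exact_mod_cast phi_mul_sub_phi_strictMonoOn (k := 3) (by norm_num)
  have hanti : StrictAntiOn (fun r : ℝ => phi (3 / r) - phi (1 / r)) (Ioi 0) := by
    simpa only [Function.comp_def, mul_one_div] using
      hmono.comp_strictAntiOn one_div_strictAntiOn fun r (hr : 0 < r) => (one_div_pos.mpr hr).le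
  have htwo : phi (3 / 2) - phi (1 / 2) = 2 / 3 := by
    have := phi_add_one_sub_phi (x := 1 / 2) (by norm_num)
    norm_num at this
    exact this
  refine ⟨hanti, htwo, fun r hr hr2 => ?_, fun r hr2 => ?_⟩
  · exact htwo ▸ hanti hr (by norm_num : (2 : ℝ) ∈ Ioi 0) hr2
  · exact htwo ▸ hanti (by norm_num : (2 : ℝ) ∈ Ioi 0) (by simp only [mem_Ioi]; linarith) hr2
end

section
/- Let p = Σ_{i=1}^n αᵢ pᵢ be a symmetric unimodal mixture where pᵢ(x) = (1/Zᵢ) e^{-βᵢ|x-m|^{θᵢ}} with θᵢ, βᵢ > 0, αᵢ > 0, Σαᵢ = 1, and let σᵢ² = Var(pᵢ) with r = max_{i,j} σᵢ²/σⱼ². Then Var(p) ≤ M(r) · Πᵢ (1/A(θᵢ))^{αᵢ} · e^{2h(p)}. -/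
/-- `M(r) = (r-1) r^{1/(r-1)} / (e log r)` for `r ≠ 1`, with `M(1) = 1`. -/
noncomputable def M (r : ℝ) : ℝ :=
  if r = 1 then 1 else (r - 1) * r ^ (1 / (r - 1)) / (Real.exp 1 * Real.log r)

/-!
Each component `pᵢ` is a generalized Gaussian, whose variance and differential entropy are
explicit Gamma integrals related by `σᵢ² = e^{2 h(pᵢ)} / A(θᵢ)`. The variance of the symmetric
mixture is the arithmetic mean `∑ αᵢ σᵢ²`. Specht's reverse AM–GM inequality bounds it by `M(r)`
times the geometric mean `∏ (σᵢ²)^{αᵢ} = ∏ (1/A(θᵢ))^{αᵢ} · e^{2 ∑ αᵢ h(pᵢ)}`, and concavity of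
the entropy in the density gives `∑ αᵢ h(pᵢ) ≤ h(p)`.
-/

open Real MeasureTheory Set

lemma integrable_comp_abs_of_integrableOn_Ioi {f : ℝ → ℝ} (hf : IntegrableOn f (Ioi 0)) :
    Integrable fun x => f |x| := by
  have hIoi : IntegrableOn (fun x => f |x|) (Ioi 0) :=
    hf.congr_fun (fun x hx => by rw [abs_of_pos hx]) measurableSet_Ioi
  have hIic : IntegrableOn (fun x => f |x|) (Iic 0) := by
    rw [← (Measure.measurePreserving_neg volume).integrableOn_comp_preimage
      (Homeomorph.neg ℝ).measurableEmbedding]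
    simpa [Function.comp_def, integrableOn_Ici_iff_integrableOn_Ioi] using hIoi
  simpa using hIic.union hIoi

section AbsoluteMoments

variable {s θ b : ℝ} (m : ℝ)

lemma integrable_abs_sub_rpow_mul_exp (hs : -1 < s) (hθ : 0 < θ) (hb : 0 < b) :
    Integrable fun x : ℝ => |x - m| ^ s * exp (-b * |x - m| ^ θ) :=
  (integrable_comp_abs_of_integrableOn_Ioi
    (integrableOn_rpow_mul_exp_neg_mul_rpow hs hθ hb)).comp_sub_right m

lemma integral_abs_sub_rpow_mul_exp (hs : -1 < s) (hθ : 0 < θ) (hb : 0 < b) :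
    ∫ x : ℝ, |x - m| ^ s * exp (-b * |x - m| ^ θ) =
      2 * (b ^ (-(s + 1) / θ) * (1 / θ) * Gamma ((s + 1) / θ)) := by
  rw [integral_sub_right_eq_self (fun x => |x| ^ s * exp (-b * |x| ^ θ)),
    integral_comp_abs (f := fun x => x ^ s * exp (-b * x ^ θ)),
    integral_rpow_mul_exp_neg_mul_rpow hθ hs hb]

end AbsoluteMoments

section GeneralizedGaussian

noncomputable def ggNormConst (β θ : ℝ) : ℝ := 2 * β ^ (-(1 / θ)) * θ⁻¹ * Gamma (1 / θ)

noncomputable def ggDensity (m β θ x : ℝ) : ℝ := (ggNormConst β θ)⁻¹ * exp (-β * |x - m| ^ θ)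

noncomputable def ggVariance (β θ : ℝ) : ℝ := β ^ (-(2 / θ)) * Gamma (3 / θ) / Gamma (1 / θ)

noncomputable def ggEntropy (β θ : ℝ) : ℝ := log (ggNormConst β θ) + 1 / θ

variable {s β θ : ℝ} (m : ℝ)

lemma ggNormConst_pos (hβ : 0 < β) (hθ : 0 < θ) : 0 < ggNormConst β θ := by
  have := Gamma_pos_of_pos (one_div_pos.mpr hθ)
  unfold ggNormConst
  positivity

lemma ggDensity_pos (hβ : 0 < β) (hθ : 0 < θ) (x : ℝ) : 0 < ggDensity m β θ x := by
  have := ggNormConst_pos hβ hθ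
  unfold ggDensity
  positivity

lemma integrable_abs_sub_rpow_mul_ggDensity (hs : -1 < s) (hβ : 0 < β) (hθ : 0 < θ) :
    Integrable fun x => |x - m| ^ s * ggDensity m β θ x := by
  simpa only [ggDensity, mul_left_comm] using
    (integrable_abs_sub_rpow_mul_exp m hs hθ hβ).const_mul (ggNormConst β θ)⁻¹

lemma integral_abs_sub_rpow_mul_ggDensity (hs : -1 < s) (hβ : 0 < β) (hθ : 0 < θ) :
    ∫ x, |x - m| ^ s * ggDensity m β θ x =
      β ^ (-(s / θ)) * Gamma ((s + 1) / θ) / Gamma (1 / θ) := by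
  have hpow : β ^ (-(s + 1) / θ) = β ^ (-(s / θ)) * β ^ (-(1 / θ)) := by
    rw [← rpow_add hβ]; ring_nf
  simp only [ggDensity, mul_left_comm _ (ggNormConst β θ)⁻¹]
  rw [integral_const_mul, integral_abs_sub_rpow_mul_exp m hs hθ hβ, hpow, ggNormConst]
  have := rpow_pos_of_pos hβ (-(1 / θ))
  field_simp

lemma integrable_ggDensity (hβ : 0 < β) (hθ : 0 < θ) : Integrable (ggDensity m β θ) := by
  simpa using integrable_abs_sub_rpow_mul_ggDensity m (s := 0) (by norm_num) hβ hθ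

lemma integral_ggDensity (hβ : 0 < β) (hθ : 0 < θ) : ∫ x, ggDensity m β θ x = 1 := by
  have hΓ := Gamma_pos_of_pos (one_div_pos.mpr hθ)
  simpa only [rpow_zero, one_mul, zero_add, zero_div, neg_zero, div_self hΓ.ne'] using
    integral_abs_sub_rpow_mul_ggDensity m (s := 0) (by norm_num) hβ hθ

lemma integrable_sq_mul_ggDensity (hβ : 0 < β) (hθ : 0 < θ) :
    Integrable fun x => (x - m) ^ 2 * ggDensity m β θ x := by
  simpa using integrable_abs_sub_rpow_mul_ggDensity m (s := 2) (by norm_num) hβ hθ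

lemma integral_sq_mul_ggDensity (hβ : 0 < β) (hθ : 0 < θ) :
    ∫ x, (x - m) ^ 2 * ggDensity m β θ x = ggVariance β θ := by
  convert integral_abs_sub_rpow_mul_ggDensity m (s := 2) (by norm_num) hβ hθ using 3
  · simp
  · rw [ggVariance]; norm_num

lemma negMulLog_ggDensity (hβ : 0 < β) (hθ : 0 < θ) (x : ℝ) :
    negMulLog (ggDensity m β θ x) =
      log (ggNormConst β θ) * ggDensity m β θ x + β * (|x - m| ^ θ * ggDensity m β θ x) := by
  rw [negMulLog, ggDensity, log_mul (inv_ne_zero (ggNormConst_pos hβ hθ).ne') (exp_ne_zero _),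
    log_inv, log_exp]
  ring

lemma integrable_negMulLog_ggDensity (hβ : 0 < β) (hθ : 0 < θ) :
    Integrable fun x => negMulLog (ggDensity m β θ x) := by
  simp only [negMulLog_ggDensity m hβ hθ]
  exact ((integrable_ggDensity m hβ hθ).const_mul _).add
    ((integrable_abs_sub_rpow_mul_ggDensity m (by linarith) hβ hθ).const_mul _)

lemma integral_negMulLog_ggDensity (hβ : 0 < β) (hθ : 0 < θ) :
    ∫ x, negMulLog (ggDensity m β θ x) = ggEntropy β θ := by
  simp only [negMulLog_ggDensity m hβ hθ]
  rw [integral_add ((integrable_ggDensity m hβ hθ).const_mul _)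
      ((integrable_abs_sub_rpow_mul_ggDensity m (by linarith) hβ hθ).const_mul _),
    integral_const_mul, integral_const_mul, integral_ggDensity m hβ hθ,
    integral_abs_sub_rpow_mul_ggDensity m (by linarith) hβ hθ]
  rw [show (θ + 1) / θ = 1 / θ + 1 by field_simp; ring, Gamma_add_one (by positivity),
    div_self hθ.ne', rpow_neg_one, ggEntropy]
  field_simp

lemma ggVariance_pos (hβ : 0 < β) (hθ : 0 < θ) : 0 < ggVariance β θ := by
  have := Gamma_pos_of_pos (one_div_pos.mpr hθ)
  have := Gamma_pos_of_pos (div_pos three_pos hθ)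
  have := rpow_pos_of_pos hβ (-(2 / θ))
  unfold ggVariance
  positivity

lemma A_pos (hθ : 0 < θ) : 0 < A θ := by
  have := Gamma_pos_of_pos (one_div_pos.mpr hθ)
  have := Gamma_pos_of_pos (div_pos three_pos hθ)
  unfold A
  positivity

lemma ggVariance_eq_one_div_A_mul_exp (hβ : 0 < β) (hθ : 0 < θ) :
    ggVariance β θ = 1 / A θ * exp (2 * ggEntropy β θ) := by
  have := Gamma_pos_of_pos (one_div_pos.mpr hθ)
  have := Gamma_pos_of_pos (div_pos three_pos hθ)
  have hsq : (β ^ (-(1 / θ))) ^ 2 = β ^ (-(2 / θ)) := by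
    rw [← rpow_natCast, ← rpow_mul hβ.le]; ring_nf
  rw [ggEntropy, mul_add, exp_add, mul_comm 2 (log _), exp_mul, exp_log (ggNormConst_pos hβ hθ),
    rpow_two, ggNormConst, ggVariance, A, mul_pow, mul_pow, mul_pow, hsq]
  field_simp
  ring_nf

end GeneralizedGaussian

section MixtureEntropy

lemma negMulLog_sum_le {ι : Type*} (s : Finset ι) {a : ι → ℝ} (ha : ∀ i ∈ s, 0 ≤ a i) :
    negMulLog (∑ i ∈ s, a i) ≤ ∑ i ∈ s, negMulLog (a i) := by
  simp only [negMulLog, neg_mul, Finset.sum_mul, ← Finset.sum_neg_distrib]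
  refine Finset.sum_le_sum fun i hi => ?_
  rcases (ha i hi).eq_or_lt with h0 | hpos
  · simp [← h0]
  · have := log_le_log hpos (Finset.single_le_sum ha hi)
    nlinarith

lemma sum_mul_negMulLog_le_negMulLog_sum {ι : Type*} {s : Finset ι} {w a : ι → ℝ}
    (hw : ∀ i ∈ s, 0 ≤ w i) (hw1 : ∑ i ∈ s, w i = 1) (ha : ∀ i ∈ s, 0 ≤ a i) :
    ∑ i ∈ s, w i * negMulLog (a i) ≤ negMulLog (∑ i ∈ s, w i * a i) :=
  concaveOn_negMulLog.le_map_sum hw hw1 ha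

variable {Ω ι : Type*} [MeasurableSpace Ω] {μ : Measure Ω} {s : Finset ι} {w : ι → ℝ}
  {f : ι → Ω → ℝ}

lemma integrable_negMulLog_sum (hw : ∀ i ∈ s, 0 ≤ w i) (hw1 : ∑ i ∈ s, w i = 1)
    (hf : ∀ i ∈ s, ∀ x, 0 ≤ f i x) (hf_int : ∀ i ∈ s, Integrable (f i) μ)
    (hf_ent : ∀ i ∈ s, Integrable (fun x => negMulLog (f i x)) μ) :
    Integrable (fun x => negMulLog (∑ i ∈ s, w i * f i x)) μ := by
  refine integrable_of_le_of_le (g₁ := fun x => ∑ i ∈ s, w i * negMulLog (f i x))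
    (g₂ := fun x => ∑ i ∈ s, negMulLog (w i * f i x)) ?_
    (ae_of_all _ fun x => sum_mul_negMulLog_le_negMulLog_sum hw hw1 fun i hi => hf i hi x)
    (ae_of_all _ fun x => negMulLog_sum_le s fun i hi => mul_nonneg (hw i hi) (hf i hi x))
    (integrable_finsetSum s fun i hi => (hf_ent i hi).const_mul _) ?_
  · exact continuous_negMulLog.comp_aestronglyMeasurable
      (integrable_finsetSum s fun i hi => (hf_int i hi).const_mul (w i)).aestronglyMeasurable
  · simp only [negMulLog_mul]
    exact integrable_finsetSum s fun i hi =>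
      ((hf_int i hi).mul_const _).add ((hf_ent i hi).const_mul _)

lemma sum_mul_integral_negMulLog_le (hw : ∀ i ∈ s, 0 ≤ w i) (hw1 : ∑ i ∈ s, w i = 1)
    (hf : ∀ i ∈ s, ∀ x, 0 ≤ f i x) (hf_int : ∀ i ∈ s, Integrable (f i) μ)
    (hf_ent : ∀ i ∈ s, Integrable (fun x => negMulLog (f i x)) μ) :
    ∑ i ∈ s, w i * ∫ x, negMulLog (f i x) ∂μ ≤ ∫ x, negMulLog (∑ i ∈ s, w i * f i x) ∂μ := by
  simp only [← integral_const_mul]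
  rw [← integral_finsetSum s fun i hi => (hf_ent i hi).const_mul _]
  exact integral_mono (integrable_finsetSum s fun i hi => (hf_ent i hi).const_mul _)
    (integrable_negMulLog_sum hw hw1 hf hf_int hf_ent)
    fun x => sum_mul_negMulLog_le_negMulLog_sum hw hw1 fun i hi => hf i hi x

end MixtureEntropy

section ReverseAMGM

variable {r : ℝ}

lemma M_eq_of_one_lt (hr : 1 < r) : M r = (r - 1) / log r * exp (log r / (r - 1) - 1) := by
  rw [M, if_neg hr.ne', rpow_def_of_pos (by linarith), exp_sub]
  field_simp

lemma M_nonneg (hr : 1 ≤ r) : 0 ≤ M r := by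
  rcases hr.eq_or_lt with rfl | hr
  · simp [M]
  · rw [M_eq_of_one_lt hr]
    have := log_pos hr
    exact mul_nonneg (div_nonneg (by linarith) this.le) (exp_pos _).le

lemma le_one_add_mul_log_of_mem_Icc (hr : 1 < r) {x : ℝ} (hx : x ∈ Icc 1 r) :
    x ≤ 1 + (r - 1) / log r * log x := by
  have hlog : 0 < log r := log_pos hr
  have hx0 : 0 < x := by linarith [hx.1]
  set t := log x / log r with ht
  have ht0 : 0 ≤ t := div_nonneg (log_nonneg hx.1) hlog.le
  have ht1 : t ≤ 1 := div_le_one_of_le₀ (log_le_log hx0 hx.2) hlog.le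
  have hconv := convexOn_exp.2 (mem_univ 0) (mem_univ (log r)) (sub_nonneg.2 ht1) ht0 (by ring)
  simp only [smul_eq_mul, mul_zero, zero_add, exp_zero, exp_log (by linarith : 0 < r)] at hconv
  rw [ht, div_mul_cancel₀ _ hlog.ne', exp_log hx0] at hconv
  calc x ≤ (1 - t) * 1 + t * r := hconv
    _ = 1 + (r - 1) / log r * log x := by rw [ht]; ring

lemma one_add_mul_log_le_M_mul (hr : 1 < r) {y : ℝ} (hy : 0 < y) :
    1 + (r - 1) / log r * log y ≤ M r * y := by
  have hlog : 0 < log r := log_pos hr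
  have hr1 : r - 1 ≠ 0 := by linarith
  calc 1 + (r - 1) / log r * log y
      = (r - 1) / log r * (log y + log r / (r - 1) - 1 + 1) := by
        field_simp; ring
    _ ≤ (r - 1) / log r * exp (log y + log r / (r - 1) - 1) := by
        gcongr; exact add_one_le_exp _
    _ = M r * y := by
        rw [M_eq_of_one_lt hr, add_sub_assoc, exp_add, exp_log hy]; ring

variable {ι : Type*} {s : Finset ι} {w : ι → ℝ}

lemma sum_mul_le_M_mul_prod_rpow_of_mem_Icc {x : ι → ℝ} (hw : ∀ i ∈ s, 0 ≤ w i)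
    (hw1 : ∑ i ∈ s, w i = 1) (hx : ∀ i ∈ s, x i ∈ Icc 1 r) :
    ∑ i ∈ s, w i * x i ≤ M r * ∏ i ∈ s, x i ^ w i := by
  obtain ⟨j, hj⟩ := Finset.nonempty_of_sum_ne_zero (hw1 ▸ one_ne_zero)
  rcases ((hx j hj).1.trans (hx j hj).2).eq_or_lt with rfl | hr
  · have hx1 : ∀ i ∈ s, x i = 1 := fun i hi => le_antisymm (hx i hi).2 (hx i hi).1
    rw [Finset.sum_congr rfl fun i hi => by rw [hx1 i hi], Finset.prod_congr rfl fun i hi => by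
      rw [hx1 i hi]]
    simp [M, hw1]
  · have hx0 : ∀ i ∈ s, 0 < x i := fun i hi => by linarith [(hx i hi).1]
    have hlog_prod : log (∏ i ∈ s, x i ^ w i) = ∑ i ∈ s, w i * log (x i) := by
      rw [log_prod fun i hi => (rpow_pos_of_pos (hx0 i hi) _).ne']
      exact Finset.sum_congr rfl fun i hi => log_rpow (hx0 i hi) _
    calc ∑ i ∈ s, w i * x i ≤ ∑ i ∈ s, w i * (1 + (r - 1) / log r * log (x i)) :=
          Finset.sum_le_sum fun i hi =>
            mul_le_mul_of_nonneg_left (le_one_add_mul_log_of_mem_Icc hr (hx i hi)) (hw i hi)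
      _ = 1 + (r - 1) / log r * log (∏ i ∈ s, x i ^ w i) := by
          simp only [mul_add, mul_one, Finset.sum_add_distrib, hw1, hlog_prod, Finset.mul_sum]
          exact congrArg _ (Finset.sum_congr rfl fun i _ => by ring)
      _ ≤ M r * ∏ i ∈ s, x i ^ w i :=
          one_add_mul_log_le_M_mul hr (Finset.prod_pos fun i hi => rpow_pos_of_pos (hx0 i hi) _)

/-- Specht's reverse AM–GM inequality. -/
theorem sum_mul_le_M_mul_prod_rpow {a : ι → ℝ} (hw : ∀ i ∈ s, 0 ≤ w i)
    (hw1 : ∑ i ∈ s, w i = 1) (ha : ∀ i ∈ s, 0 < a i) (hr : ∀ i ∈ s, ∀ j ∈ s, a i / a j ≤ r) :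
    ∑ i ∈ s, w i * a i ≤ M r * ∏ i ∈ s, a i ^ w i := by
  obtain ⟨j, hj, hmin⟩ :=
    s.exists_min_image a (Finset.nonempty_of_sum_ne_zero (hw1 ▸ one_ne_zero))
  have hnorm := sum_mul_le_M_mul_prod_rpow_of_mem_Icc (x := fun i => a i / a j) hw hw1
    fun i hi => ⟨(one_le_div (ha j hj)).2 (hmin i hi), hr i hi j hj⟩
  have hprod : ∏ i ∈ s, (a i / a j) ^ w i = (∏ i ∈ s, a i ^ w i) / a j := by
    rw [Finset.prod_congr rfl fun i hi => div_rpow (ha i hi).le (ha j hj).le (w i),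
      Finset.prod_div_distrib, ← rpow_sum_of_pos (ha j hj), hw1, rpow_one]
  simp only [mul_div_assoc', ← Finset.sum_div, hprod] at hnorm
  rwa [div_le_div_iff_of_pos_right (ha j hj)] at hnorm

end ReverseAMGM

section GeneralizedGaussianMixture

variable {ι : Type*} {s : Finset ι} {w β θ : ι → ℝ} (m : ℝ)

lemma integral_sq_mul_sum_ggDensity (hβ : ∀ i ∈ s, 0 < β i) (hθ : ∀ i ∈ s, 0 < θ i) :
    ∫ x, (x - m) ^ 2 * ∑ i ∈ s, w i * ggDensity m (β i) (θ i) x =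
      ∑ i ∈ s, w i * ggVariance (β i) (θ i) := by
  simp only [Finset.mul_sum, mul_left_comm _ (w _)]
  rw [integral_finsetSum _ fun i hi =>
    (integrable_sq_mul_ggDensity m (hβ i hi) (hθ i hi)).const_mul _]
  exact Finset.sum_congr rfl fun i hi => by
    rw [integral_const_mul, integral_sq_mul_ggDensity m (hβ i hi) (hθ i hi)]

lemma sum_mul_ggEntropy_le_integral_negMulLog (hw : ∀ i ∈ s, 0 ≤ w i)
    (hw1 : ∑ i ∈ s, w i = 1) (hβ : ∀ i ∈ s, 0 < β i) (hθ : ∀ i ∈ s, 0 < θ i) :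
    ∑ i ∈ s, w i * ggEntropy (β i) (θ i) ≤
      ∫ x, negMulLog (∑ i ∈ s, w i * ggDensity m (β i) (θ i) x) := by
  convert sum_mul_integral_negMulLog_le hw hw1
    (fun i hi x => (ggDensity_pos m (hβ i hi) (hθ i hi) x).le)
    (fun i hi => integrable_ggDensity m (hβ i hi) (hθ i hi))
    (fun i hi => integrable_negMulLog_ggDensity m (hβ i hi) (hθ i hi)) using 1
  exact Finset.sum_congr rfl fun i hi => by
    rw [integral_negMulLog_ggDensity m (hβ i hi) (hθ i hi)]

lemma prod_ggVariance_rpow (hβ : ∀ i ∈ s, 0 < β i) (hθ : ∀ i ∈ s, 0 < θ i) :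
    ∏ i ∈ s, ggVariance (β i) (θ i) ^ w i =
      (∏ i ∈ s, (1 / A (θ i)) ^ w i) * exp (2 * ∑ i ∈ s, w i * ggEntropy (β i) (θ i)) := by
  rw [Finset.mul_sum, exp_sum, ← Finset.prod_mul_distrib]
  refine Finset.prod_congr rfl fun i hi => ?_
  rw [ggVariance_eq_one_div_A_mul_exp (hβ i hi) (hθ i hi),
    mul_rpow (one_div_nonneg.2 (A_pos (hθ i hi)).le) (exp_pos _).le, ← exp_mul]
  ring_nf

end GeneralizedGaussianMixture

theorem mixture_variance_upper_bound_general (n : ℕ) (m : ℝ)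
    (θ β α : Fin n → ℝ) (r : ℝ)
    (hθ : ∀ i, 0 < θ i) (hβ : ∀ i, 0 < β i) (hα : ∀ i, 0 < α i)
    (hsum : ∑ i, α i = 1)
    (p : ℝ → ℝ)
    (hp : ∀ x, p x = ∑ i, α i *
      ((2 * β i ^ (-(1 / θ i)) * (θ i)⁻¹ * Real.Gamma (1 / θ i))⁻¹ *
        Real.exp (-β i * |x - m| ^ θ i)))
    (σ2 : Fin n → ℝ)
    (hσ2 : ∀ i, σ2 i = β i ^ (-(2 / θ i)) * Real.Gamma (3 / θ i) / Real.Gamma (1 / θ i))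
    (hr : ∀ i j, σ2 i / σ2 j ≤ r) :
    ∫ x : ℝ, (x - m) ^ 2 * p x ≤
      M r * (∏ i, (1 / A (θ i)) ^ α i) *
        Real.exp (2 * (-∫ x : ℝ, p x * Real.log (p x))) := by
  obtain rfl : p = fun x => ∑ i, α i * ggDensity m (β i) (θ i) x := funext hp
  obtain rfl : σ2 = fun i => ggVariance (β i) (θ i) := funext hσ2
  obtain ⟨i, -⟩ := Finset.nonempty_of_sum_ne_zero (hsum ▸ one_ne_zero)
  have hr1 : 1 ≤ r := by simpa [div_self (ggVariance_pos (hβ i) (hθ i)).ne'] using hr i i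
  have hent := sum_mul_ggEntropy_le_integral_negMulLog m (fun i _ => (hα i).le) hsum
    (fun i _ => hβ i) (fun i _ => hθ i)
  calc _ = ∑ i, α i * ggVariance (β i) (θ i) :=
        integral_sq_mul_sum_ggDensity m (fun i _ => hβ i) (fun i _ => hθ i)
    _ ≤ M r * ∏ i, ggVariance (β i) (θ i) ^ α i :=
        sum_mul_le_M_mul_prod_rpow (fun i _ => (hα i).le) hsum
          (fun i _ => ggVariance_pos (hβ i) (hθ i)) fun i _ j _ => hr i j
    _ = M r * (∏ i, (1 / A (θ i)) ^ α i) * exp (2 * ∑ i, α i * ggEntropy (β i) (θ i)) := by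
        rw [prod_ggVariance_rpow (fun i _ => hβ i) (fun i _ => hθ i), mul_assoc]
    _ ≤ M r * (∏ i, (1 / A (θ i)) ^ α i) *
        exp (2 * ∫ x, negMulLog (∑ i, α i * ggDensity m (β i) (θ i) x)) := by
        gcongr
        exact mul_nonneg (M_nonneg hr1)
          (Finset.prod_nonneg fun i _ => rpow_nonneg (one_div_nonneg.2 (A_pos (hθ i)).le) _)
    _ = _ := by simp only [negMulLog, neg_mul, integral_neg]

/-- Upper bound on the variance of a symmetric unimodal mixture of generalized
Gaussian densities in terms of the entropy power:
`Var(p) ≤ M(r) · Πᵢ (1/A(θᵢ))^{αᵢ} · e^{2h(p)}`. -/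
theorem mixture_variance_upper_bound (n : ℕ) (hn : 0 < n) (m : ℝ)
    (θ β α : Fin n → ℝ) (r : ℝ)
    (hθ : ∀ i, 0 < θ i) (hβ : ∀ i, 0 < β i) (hα : ∀ i, 0 < α i)
    (hsum : ∑ i, α i = 1)
    (p : ℝ → ℝ)
    (hp : ∀ x, p x = ∑ i, α i *
      ((2 * β i ^ (-(1 / θ i)) * (θ i)⁻¹ * Real.Gamma (1 / θ i))⁻¹ *
        Real.exp (-β i * |x - m| ^ θ i)))
    (σ2 : Fin n → ℝ)
    (hσ2 : ∀ i, σ2 i = β i ^ (-(2 / θ i)) * Real.Gamma (3 / θ i) / Real.Gamma (1 / θ i))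
    (hr : ∀ i j, σ2 i / σ2 j ≤ r) (hr' : ∃ i j, σ2 i / σ2 j = r) :
    ∫ x : ℝ, (x - m) ^ 2 * p x ≤
      M r * (∏ i, (1 / A (θ i)) ^ α i) *
        Real.exp (2 * (-∫ x : ℝ, p x * Real.log (p x))) :=
  mixture_variance_upper_bound_general n m θ β α r hθ hβ hα hsum p hp σ2 hσ2 hr
end
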